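/- arXiv:2010.07294 — 4 statements merged into one kernel-verified Lean document; each statement's English description precedes it below -/
import Mathlib

section
/- For all m ≥ 3 and all real numbers d with 0 < d < (m-2)/(m·log₂ 3): if y ≥ m·2^m and S_m(y) < m·d, then T^m(y) < y/2. -/
open Filter

/-- The (accelerated) Collatz map. -/
def T (n : ℕ) : ℕ := if n % 2 = 0 then n / 2 else (3 * n + 1) / 2

/-- Parity of the k-th iterate. -/
def X (k y : ℕ) : ℕ := T^[k] y % 2

/-- S_m(y) = X_0(y) + ... + X_m(y). -/
def S (m y : ℕ) : ℕ := ∑ k ∈ Finset.range (m + 1), X k y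

/-- Upper natural density. -/
noncomputable def ud (A : Set ℕ) : ℝ :=
  Filter.limsup (fun n => ((A ∩ Set.Iic n).ncard : ℝ) / n) Filter.atTop

/-- Positive upper density preserving. -/
def PDP (H : Set ℕ → Set ℕ) : Prop := ∀ A : Set ℕ, 0 < ud A → 0 < ud (H A)

/-- H_f for real-valued f. -/
def Hf (f : ℕ → ℝ) (A : Set ℕ) : Set ℕ :=
  {m | ∃ n ∈ A, ∃ k : ℕ, T^[k] n = m ∧ (m : ℝ) < f n}

/-- H_f for ℕ-valued f. -/
def HfN (f : ℕ → ℕ) (A : Set ℕ) : Set ℕ :=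
  {m | ∃ n ∈ A, ∃ k : ℕ, T^[k] n = m ∧ m < f n}

/-- S has natural density one. -/
def DensityOne (A : Set ℕ) : Prop :=
  Filter.Tendsto (fun n => ((A ∩ Set.Iic n).ncard : ℝ) / n) Filter.atTop (nhds 1)

/-!
Each step of `T` multiplies by `1/2` or by `3/2` up to an additive `1/2`, so after `m` steps
`2^m T^m(y) ≤ 3^s (y + 2^m)` where `s` counts the odd steps. The density bound on `d` forces
`3^s < 2^(m-2)`, and `y ≥ 2^m` then gives `T^m(y) < (y + 2^m)/4 ≤ y/2`.
-/

open Finset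

lemma two_mul_T (n : ℕ) : 2 * T n = 3 ^ (n % 2) * n + n % 2 := by
  rcases Nat.mod_two_eq_zero_or_one n with h | h <;> simp [T, h] <;> omega

lemma X_le_one (k y : ℕ) : X k y ≤ 1 :=
  Nat.le_of_lt_succ (Nat.mod_lt _ two_pos)

lemma two_pow_mul_iterate_T_le (y : ℕ) :
    ∀ k, 2 ^ k * T^[k] y ≤ 3 ^ (∑ j ∈ range k, X j y) * (y + 2 ^ k)
  | 0 => by simp
  | k + 1 => by
    set s := ∑ j ∈ range k, X j y
    have ih := two_pow_mul_iterate_T_le y k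
    have hstep : 2 * T (T^[k] y) = 3 ^ X k y * T^[k] y + X k y := two_mul_T _
    have hX := X_le_one k y
    have hpow : 1 ≤ 3 ^ (s + X k y) := Nat.one_le_pow _ _ three_pos
    rw [Function.iterate_succ_apply', sum_range_succ]
    calc 2 ^ (k + 1) * T (T^[k] y) = 3 ^ X k y * (2 ^ k * T^[k] y) + 2 ^ k * X k y := by
          rw [pow_succ, mul_assoc, hstep]; ring
      _ ≤ 3 ^ X k y * (3 ^ s * (y + 2 ^ k)) + 2 ^ k * 3 ^ (s + X k y) := by
          gcongr; exact hX.trans hpow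
      _ = 3 ^ (s + X k y) * (y + 2 ^ (k + 1)) := by ring

lemma two_mul_iterate_T_lt {k y : ℕ} (hy : 2 ^ k ≤ y)
    (hs : 4 * 3 ^ (∑ j ∈ range k, X j y) < 2 ^ k) : 2 * T^[k] y < y := by
  have hbound := two_pow_mul_iterate_T_le y k
  have hpos : 0 < y + 2 ^ k := by positivity
  have : 2 ^ k * (2 * (2 * T^[k] y)) < 2 ^ k * (2 * y) :=
    calc 2 ^ k * (2 * (2 * T^[k] y)) = 4 * (2 ^ k * T^[k] y) := by ring
      _ ≤ 4 * (3 ^ (∑ j ∈ range k, X j y) * (y + 2 ^ k)) := by gcongr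
      _ < 2 ^ k * (y + 2 ^ k) := by rw [← mul_assoc]; gcongr
      _ ≤ 2 ^ k * (2 * y) := by gcongr; omega
  have := Nat.lt_of_mul_lt_mul_left this
  omega

lemma three_pow_lt_two_pow_of_mul_logb_lt {s n : ℕ} (h : s * Real.logb 2 3 < n) :
    3 ^ s < 2 ^ n := by
  have : Real.logb 2 ((3 : ℝ) ^ s) < n := by rwa [Real.logb_pow]
  rw [Real.logb_lt_iff_lt_rpow one_lt_two (by positivity), Real.rpow_natCast] at this
  exact_mod_cast this

theorem stmt3_general (m : ℕ) (hm : 3 ≤ m) (d : ℝ)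
    (hd' : d < ((m : ℝ) - 2) / (m * Real.logb 2 3))
    (y : ℕ) (hy : m * 2 ^ m ≤ y) (hS : (S m y : ℝ) < m * d) :
    (T^[m] y : ℝ) < (y : ℝ) / 2 := by
  set s := ∑ j ∈ range m, X j y
  have hL : 0 < Real.logb 2 3 := Real.logb_pos one_lt_two (by norm_num)
  have hm0 : (0 : ℝ) < m := by positivity
  have hsS : s ≤ S m y := by
    rw [S, sum_range_succ]; exact Nat.le_add_right _ _
  have hmd : (m : ℝ) * d < (m - 2) / Real.logb 2 3 := by
    calc (m : ℝ) * d < m * ((m - 2) / (m * Real.logb 2 3)) := by gcongr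
      _ = (m - 2) / Real.logb 2 3 := by field_simp
  have hlog : (s : ℝ) * Real.logb 2 3 < (m - 2 : ℕ) := by
    have : (s : ℝ) ≤ S m y := by exact_mod_cast hsS
    rw [Nat.cast_sub (by omega), Nat.cast_two, ← lt_div_iff₀ hL]
    linarith
  have hs : 4 * 3 ^ s < 2 ^ m := by
    have := three_pow_lt_two_pow_of_mul_logb_lt hlog
    calc 4 * 3 ^ s < 4 * 2 ^ (m - 2) := by gcongr
      _ = 2 ^ m := by rw [← pow_sub_mul_pow 2 (show 2 ≤ m by omega)]; ring
  have hy' : 2 ^ m ≤ y := le_trans (Nat.le_mul_of_pos_left _ (by omega)) hy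
  have hT : ((2 * T^[m] y : ℕ) : ℝ) < y := by exact_mod_cast two_mul_iterate_T_lt hy' hs
  push_cast at hT
  linarith

theorem stmt3 (m : ℕ) (hm : 3 ≤ m) (d : ℝ) (hd : 0 < d)
    (hd' : d < ((m : ℝ) - 2) / (m * Real.logb 2 3))
    (y : ℕ) (hy : m * 2 ^ m ≤ y) (hS : (S m y : ℝ) < m * d) :
    (T^[m] y : ℝ) < (y : ℝ) / 2 :=
  stmt3_general m hm d hd' y hy hS
end

section
/- The map T is positive upper density preserving: for any A ⊆ ℕ with positive upper density, the image T(A) = {T(n) : n ∈ A} has positive upper density; more precisely, d̄(T(A)) ≥ d̄(A)/3. -/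
open Filter

/-!
`T` is injective on the even and on the odd numbers, so it is at most two-to-one, and it maps
`[0, n]` into `[0, (3n+1)/2]`. Hence `|A ∩ [0, n]| ≤ 2 |T(A) ∩ [0, (3n+1)/2]|`, and since
`(3n+1)/2` is asymptotically `3n/2`, passing to the limsup gives `d̄(A) ≤ 2 · (3/2) · d̄(T(A))`.
-/

open Set Topology

lemma ncard_le_two_mul_ncard_image_of_injOn {α β : Type*} {f : α → β} {s t : Set α}
    (hs : s.Finite) (ht : InjOn f t) (htc : InjOn f tᶜ) :
    s.ncard ≤ 2 * (f '' s).ncard := by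
  have hfin : (f '' s).Finite := hs.image f
  calc s.ncard = (s ∩ t ∪ s \ t).ncard := by rw [inter_union_sdiff]
    _ ≤ (s ∩ t).ncard + (s \ t).ncard := ncard_union_le _ _
    _ = (f '' (s ∩ t)).ncard + (f '' (s \ t)).ncard := by
      rw [(ht.mono inter_subset_right).ncard_image, (htc.mono fun _ hx ↦ hx.2).ncard_image]
    _ ≤ (f '' s).ncard + (f '' s).ncard :=
      add_le_add (ncard_le_ncard (image_mono inter_subset_left) hfin)
        (ncard_le_ncard (image_mono sdiff_subset) hfin)
    _ = 2 * (f '' s).ncard := by ring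

lemma T_injOn_even : InjOn T {n | n % 2 = 0} := by
  intro x (hx : x % 2 = 0) y (hy : y % 2 = 0) h
  simp only [T, hx, hy, if_true] at h
  omega

lemma T_injOn_odd : InjOn T {n | n % 2 = 0}ᶜ := by
  intro x (hx : ¬x % 2 = 0) y (hy : ¬y % 2 = 0) h
  simp only [T, hx, hy, if_false] at h
  omega

lemma T_le (n : ℕ) : T n ≤ (3 * n + 1) / 2 := by
  unfold T; split_ifs <;> omega

lemma ncard_inter_Iic_le_two_mul_ncard_image_T (A : Set ℕ) (n : ℕ) :
    (A ∩ Iic n).ncard ≤ 2 * (T '' A ∩ Iic ((3 * n + 1) / 2)).ncard := by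
  have hsub : T '' (A ∩ Iic n) ⊆ T '' A ∩ Iic ((3 * n + 1) / 2) := by
    rintro _ ⟨m, ⟨hmA, hmn⟩, rfl⟩
    exact ⟨mem_image_of_mem T hmA, (T_le m).trans (by simp only [mem_Iic] at hmn; omega)⟩
  calc (A ∩ Iic n).ncard ≤ 2 * (T '' (A ∩ Iic n)).ncard :=
        ncard_le_two_mul_ncard_image_of_injOn ((finite_Iic n).inter_of_right A)
          T_injOn_even T_injOn_odd
    _ ≤ 2 * (T '' A ∩ Iic ((3 * n + 1) / 2)).ncard :=
        Nat.mul_le_mul_left 2 (ncard_le_ncard hsub ((finite_Iic _).inter_of_right _))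

noncomputable def countingRatio (A : Set ℕ) (n : ℕ) : ℝ := ((A ∩ Iic n).ncard : ℝ) / n

lemma countingRatio_nonneg (A : Set ℕ) (n : ℕ) : 0 ≤ countingRatio A n := by
  unfold countingRatio; positivity

lemma countingRatio_le_two (A : Set ℕ) (n : ℕ) : countingRatio A n ≤ 2 := by
  rcases Nat.eq_zero_or_pos n with rfl | hn
  · simp [countingRatio]
  have hcard : (A ∩ Iic n).ncard ≤ n + 1 := by
    calc (A ∩ Iic n).ncard ≤ (Iic n).ncard := ncard_le_ncard inter_subset_right (finite_Iic n)
      _ = n + 1 := by rw [← Finset.coe_Iic, ncard_coe_finset, Nat.card_Iic]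
  have hn' : (1 : ℝ) ≤ n := by exact_mod_cast hn
  rw [countingRatio, div_le_iff₀ (by linarith)]
  have : ((A ∩ Iic n).ncard : ℝ) ≤ n + 1 := by exact_mod_cast hcard
  linarith

lemma isBoundedUnder_le_countingRatio (A : Set ℕ) {l : Filter ℕ} :
    IsBoundedUnder (· ≤ ·) l (countingRatio A) :=
  isBoundedUnder_of ⟨2, countingRatio_le_two A⟩

lemma isCoboundedUnder_le_countingRatio (A : Set ℕ) {l : Filter ℕ} [l.NeBot] :
    IsCoboundedUnder (· ≤ ·) l (countingRatio A) :=
  (isBoundedUnder_of ⟨0, countingRatio_nonneg A⟩).isCoboundedUnder_le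

lemma ud_le_mul_ud_of_ncard_le {A B : Set ℕ} {φ : ℕ → ℕ} {k c : ℝ} (hk : 0 ≤ k)
    (hφ : Tendsto φ atTop atTop) (hc : Tendsto (fun n ↦ (φ n : ℝ) / n) atTop (𝓝 c))
    (h : ∀ n, ((A ∩ Iic n).ncard : ℝ) ≤ k * (B ∩ Iic (φ n)).ncard) :
    ud A ≤ k * c * ud B := by
  set r : ℕ → ℝ := fun n ↦ k * ((φ n : ℝ) / n)
  have hr : Tendsto r atTop (𝓝 (k * c)) := hc.const_mul k
  have hr0 : ∀ n, 0 ≤ r n := fun n ↦ by positivity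
  have hbound : ∀ᶠ n in atTop, countingRatio A n ≤ (r * (countingRatio B ∘ φ)) n := by
    -- `φ n ≠ 0` rules out the junk value `countingRatio B 0 = 0`.
    filter_upwards [hφ.eventually_ne_atTop 0] with n hn
    have : (r * (countingRatio B ∘ φ)) n = k * (B ∩ Iic (φ n)).ncard / n := by
      simp only [r, countingRatio, Pi.mul_apply, Function.comp_apply]
      field_simp
    rw [this, countingRatio]
    exact div_le_div_of_nonneg_right (h n) (Nat.cast_nonneg n)
  have hr_bdd : IsBoundedUnder (· ≤ ·) atTop r := hr.isBoundedUnder_le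
  have hg0 : 0 ≤ᶠ[atTop] countingRatio B ∘ φ :=
    Eventually.of_forall fun n ↦ countingRatio_nonneg B (φ n)
  have hg_bdd : IsBoundedUnder (· ≤ ·) atTop (countingRatio B ∘ φ) :=
    isBoundedUnder_of ⟨2, fun n ↦ countingRatio_le_two B (φ n)⟩
  calc ud A = limsup (countingRatio A) atTop := rfl
    _ ≤ limsup (r * (countingRatio B ∘ φ)) atTop :=
      limsup_le_limsup hbound (isCoboundedUnder_le_countingRatio A)
        (isBoundedUnder_le_mul_of_nonneg (.of_forall hr0) hr_bdd hg0 hg_bdd)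
    _ ≤ limsup r atTop * limsup (countingRatio B ∘ φ) atTop :=
      limsup_mul_le (.of_forall hr0) hr_bdd hg0 hg_bdd
    _ ≤ k * c * ud B := by
      rw [hr.limsup_eq]
      exact mul_le_mul_of_nonneg_left (hφ.limsup_comp_le_limsup
        (isCoboundedUnder_le_countingRatio B) (isBoundedUnder_le_countingRatio B))
        (ge_of_tendsto' hr hr0)

lemma tendsto_three_mul_add_one_div_two_div_self :
    Tendsto (fun n : ℕ ↦ (((3 * n + 1) / 2 : ℕ) : ℝ) / n) atTop (𝓝 (3 / 2)) := by
  have hupper : Tendsto (fun n : ℕ ↦ (3 / 2 : ℝ) + (1 / 2) / n) atTop (𝓝 (3 / 2)) := by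
    simpa using tendsto_const_nhds.add (tendsto_const_div_atTop_nhds_zero_nat (1 / 2 : ℝ))
  refine tendsto_of_tendsto_of_tendsto_of_le_of_le' tendsto_const_nhds hupper ?_ ?_ <;>
    filter_upwards [eventually_gt_atTop 0] with n hn
  all_goals
    have hn' : (0 : ℝ) < n := by exact_mod_cast hn
    have h2 : (3 * n : ℝ) ≤ 2 * (((3 * n + 1) / 2 : ℕ) : ℝ) ∧
        2 * (((3 * n + 1) / 2 : ℕ) : ℝ) ≤ 3 * n + 1 := by
      constructor <;> norm_cast <;> omega
  · rw [le_div_iff₀ hn']; linarith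
  · rw [div_le_iff₀ hn', add_mul, div_mul_cancel₀ _ hn'.ne']; linarith

theorem stmt5 (A : Set ℕ) (hA : 0 < ud A) :
    0 < ud (T '' A) ∧ ud A / 3 ≤ ud (T '' A) := by
  have hφ : Tendsto (fun n ↦ (3 * n + 1) / 2) atTop atTop :=
    tendsto_atTop_mono (fun n ↦ show n ≤ (3 * n + 1) / 2 by omega) tendsto_id
  have hud : ud A ≤ 2 * (3 / 2) * ud (T '' A) :=
    ud_le_mul_ud_of_ncard_le zero_le_two hφ tendsto_three_mul_add_one_div_two_div_self
      fun n ↦ by exact_mod_cast ncard_inter_Iic_le_two_mul_ncard_image_T A n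
  constructor <;> linarith
end

section
/- For all increasing functions f, g : ℕ → ℝ mapping ℕ into ℕ (so compositions make sense) and all A ⊆ ℕ, we have (H_f ∘ H_g)(A) ⊆ H_{f∘g}(A). -/
open Filter

theorem stmt9_general (f g : ℕ → ℕ) (hf : Monotone f) (A : Set ℕ) :
    HfN f (HfN g A) ⊆ HfN (f ∘ g) A := by
  rintro _ ⟨_, ⟨n, hnA, j, rfl, hjg⟩, k, rfl, hkf⟩
  exact ⟨n, hnA, k + j, Function.iterate_add_apply T k j n, hkf.trans_le (hf hjg.le)⟩

theorem stmt9 (f g : ℕ → ℕ) (hf : Monotone f) (hg : Monotone g) (A : Set ℕ) :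
    HfN f (HfN g A) ⊆ HfN (f ∘ g) A :=
  stmt9_general f g hf A
end

section
/- For every c > 0, the map H_f with f(y) = c·y is positive upper density preserving, assuming that H_g with g(y) = y/2 is positive upper density preserving. -/
/-! Thresholds proportional to `y` compose multiplicatively: applying `H_{a y}` to `H_{b y}(A)`
lands inside `H_{a b y}(A)`, because a Collatz orbit point of an orbit point is an orbit point.
So `r + 1` applications of `H_{y/2}`, each preserving positive upper density, give a subset of
`H_{2^{-(r+1)} y}(A) ⊆ H_{c y}(A)` once `2^{-r} < c`, and upper density is monotone. -/

open Filter

lemma ncard_inter_Iic_le (A : Set ℕ) (n : ℕ) : (A ∩ Set.Iic n).ncard ≤ n + 1 :=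
  (Set.ncard_le_ncard Set.inter_subset_right (Set.finite_Iic n)).trans_eq (Set.ncard_Iic_nat n)

lemma ncard_inter_Iic_div_le_two (A : Set ℕ) {n : ℕ} (hn : 1 ≤ n) :
    ((A ∩ Set.Iic n).ncard : ℝ) / n ≤ 2 := by
  have hn' : (1 : ℝ) ≤ n := by exact_mod_cast hn
  rw [div_le_iff₀ (by linarith)]
  calc ((A ∩ Set.Iic n).ncard : ℝ) ≤ n + 1 := by exact_mod_cast ncard_inter_Iic_le A n
    _ ≤ 2 * n := by linarith

lemma ud_mono {A B : Set ℕ} (h : A ⊆ B) : ud A ≤ ud B := by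
  apply limsup_le_limsup
  · filter_upwards with n
    gcongr
    exact (Set.finite_Iic n).inter_of_right _
  · exact isCoboundedUnder_le_of_le atTop fun n => by positivity
  · exact isBoundedUnder_of_eventually_le
      ((eventually_ge_atTop 1).mono fun n => ncard_inter_Iic_div_le_two B)

lemma PDP.mono {H H' : Set ℕ → Set ℕ} (hH : PDP H) (hHH' : ∀ A, H A ⊆ H' A) : PDP H' :=
  fun A hA => (hH A hA).trans_le (ud_mono (hHH' A))

lemma PDP.iterate {H : Set ℕ → Set ℕ} (hH : PDP H) (r : ℕ) : PDP H^[r] := by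
  induction r with
  | zero => exact fun _ hA => hA
  | succ r ih => exact fun A hA => by rw [Function.iterate_succ_apply']; exact hH _ (ih A hA)

lemma Hf_mono {f g : ℕ → ℝ} (hfg : ∀ n, f n ≤ g n) {A B : Set ℕ} (hAB : A ⊆ B) :
    Hf f A ⊆ Hf g B :=
  fun _ ⟨n, hn, k, hk, hm⟩ => ⟨n, hAB hn, k, hk, hm.trans_le (hfg n)⟩

lemma Hf_mul_Hf_mul_subset {a : ℝ} (ha : 0 ≤ a) (b : ℝ) (A : Set ℕ) :
    Hf (fun y => a * y) (Hf (fun y => b * y) A) ⊆ Hf (fun y => a * b * y) A := by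
  rintro m ⟨n', ⟨n, hn, j, rfl, hn'⟩, k, rfl, hm⟩
  refine ⟨n, hn, k + j, Function.iterate_add_apply T k j n, ?_⟩
  calc _ < a * T^[j] n := hm
    _ ≤ a * (b * n) := mul_le_mul_of_nonneg_left hn'.le ha
    _ = a * b * n := (mul_assoc a b n).symm

lemma iterate_Hf_mul_subset {a : ℝ} (ha : 0 ≤ a) (b : ℝ) (r : ℕ) (A : Set ℕ) :
    (Hf fun y => a * y)^[r] (Hf (fun y => b * y) A) ⊆ Hf (fun y => a ^ r * b * y) A := by
  induction r with
  | zero => simp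
  | succ r ih =>
    rw [Function.iterate_succ_apply']
    refine (Hf_mono (fun _ => le_rfl) ih).trans ((Hf_mul_Hf_mul_subset ha _ A).trans ?_)
    exact Hf_mono (fun n => (by ring : _ = _).le) subset_rfl

theorem stmt15 (hhalf : PDP (Hf (fun y => (y : ℝ) / 2))) (c : ℝ) (hc : 0 < c) :
    PDP (Hf (fun y => c * y)) := by
  have hhalf_mul : PDP (Hf fun y => 2⁻¹ * (y : ℝ)) := by simpa only [div_eq_inv_mul] using hhalf
  obtain ⟨r, hr⟩ := exists_pow_lt_of_lt_one hc (by norm_num : (2⁻¹ : ℝ) < 1)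
  refine (hhalf_mul.iterate (r + 1)).mono fun A => ?_
  rw [Function.iterate_succ_apply]
  refine (iterate_Hf_mul_subset (by norm_num) _ r A).trans (Hf_mono (fun n => ?_) subset_rfl)
  have hr' : (2⁻¹ : ℝ) ^ r * 2⁻¹ ≤ c :=
    (mul_le_of_le_one_right (by positivity) (by norm_num)).trans hr.le
  exact mul_le_mul_of_nonneg_right hr' n.cast_nonneg
end
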